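/- With notation as in the Pieri rule for Gr(2, 2n+2): setting α_{1,G} = ∑_{i=n+1}^{2n} (-1)^i c_i σ_{i,2n-i} where c_{n+1} = 1 and c_i - c_{i-1} = i - n, and α_{2,G} = ∑_{i=n+1}^{2n} (-1)^i (i-n) σ_{i, 2n+1-i}, one has the identity σ_{1,0} · α_{1,G} = α_{2,G} in the cohomology ring. -/

import Mathlib

/-!
Multiplying `σ_{i,2n-i}` by `σ_{1,0}` gives `σ_{i+1,2n-i} + σ_{i,2n+1-i}`, the first term
dropping out for `i = 2n`. After shifting the index in the first sum, the coefficient of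
`σ_{i,2n+1-i}` in the product is `(-1)^i (c_i - c_{i-1}) = (-1)^i (i - n)` for `i > n + 1`,
and `(-1)^{n+1} c_{n+1} = (-1)^{n+1}` for `i = n + 1`.
-/

/-- A Schubert symbol `(a₁, a₂)` for `Gr(2, 2n+2)` is valid if `2n ≥ a₁ ≥ a₂ ≥ 0`;
the Pieri rule multiplies by `σ_{1,0}`, dropping invalid terms. -/
noncomputable def pieri (n : ℕ) (ab : ℕ × ℕ) : (ℕ × ℕ) →₀ ℤ :=
  (if ab.2 ≤ ab.1 + 1 ∧ ab.1 + 1 ≤ 2 * n then Finsupp.single (ab.1 + 1, ab.2) 1 else 0) +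
  (if ab.2 + 1 ≤ ab.1 ∧ ab.1 ≤ 2 * n then Finsupp.single (ab.1, ab.2 + 1) 1 else 0)

noncomputable def pieriMul (n : ℕ) (f : (ℕ × ℕ) →₀ ℤ) : (ℕ × ℕ) →₀ ℤ :=
  f.sum fun ab c => c • pieri n ab

open Finset

theorem pieriMul_eq_linearCombination (n : ℕ) :
    pieriMul n = Finsupp.linearCombination ℤ (pieri n) := rfl

theorem pieri_of_lt {n a b : ℕ} (hba : b < a) (ha : a ≤ 2 * n) :
    pieri n (a, b) =
      (if a < 2 * n then Finsupp.single (a + 1, b) 1 else 0) + Finsupp.single (a, b + 1) 1 := by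
  dsimp only [pieri]
  rw [if_pos (show b + 1 ≤ a ∧ a ≤ 2 * n from ⟨hba, ha⟩)]
  congr 1
  by_cases h : a < 2 * n
  · rw [if_pos ⟨by omega, h⟩, if_pos h]
  · rw [if_neg (by omega), if_neg h]

theorem Finset.sum_Icc_ite_lt_succ {M : Type*} [AddCommMonoid M] (F : ℕ → M) (a b : ℕ) :
    ∑ i ∈ Icc a b, (if i < b then F (i + 1) else 0) = ∑ i ∈ Icc a b, if a < i then F i else 0 := by
  rw [← sum_filter, ← sum_filter]
  have hlt : {i ∈ Icc a b | i < b} = Ico a b := by ext; simp; omega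
  have hgt : {i ∈ Icc a b | a < i} = Ico (a + 1) (b + 1) := by ext; simp; omega
  rw [hlt, hgt, sum_Ico_add']

theorem alternating_coeff_add_prev {n : ℕ} {c : ℕ → ℤ} (hbase : c (n + 1) = 1)
    (hrec : ∀ i : ℕ, n + 1 < i → c i = c (i - 1) + ((i : ℤ) - (n : ℤ))) {i : ℕ} (hi : n + 1 ≤ i) :
    (if n + 1 < i then (-1) ^ (i - 1) * c (i - 1) else 0) + (-1) ^ i * c i =
      (-1) ^ i * ((i : ℤ) - n) := by
  split_ifs with hi'
  · obtain ⟨k, rfl⟩ : ∃ k, i = k + 1 := ⟨i - 1, by omega⟩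
    rw [hrec (k + 1) hi', Nat.add_sub_cancel, pow_succ]
    ring
  · obtain rfl : i = n + 1 := by omega
    rw [hbase]
    push_cast
    ring

theorem stmt_12_general (n : ℕ) (c : ℕ → ℤ)
    (hbase : c (n + 1) = 1)
    (hrec : ∀ i : ℕ, n + 1 < i → c i = c (i - 1) + ((i : ℤ) - (n : ℤ))) :
    pieriMul n (∑ i ∈ Finset.Icc (n + 1) (2 * n),
        ((-1 : ℤ) ^ i * c i) • Finsupp.single (i, 2 * n - i) (1 : ℤ)) =
      ∑ i ∈ Finset.Icc (n + 1) (2 * n),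
        ((-1 : ℤ) ^ i * ((i : ℤ) - (n : ℤ))) • Finsupp.single (i, 2 * n + 1 - i) (1 : ℤ) := by
  set σ : ℕ → (ℕ × ℕ) →₀ ℤ := fun i => Finsupp.single (i, 2 * n + 1 - i) 1
  set e : ℕ → ℤ := fun i => (-1) ^ i * c i
  calc _ = ∑ i ∈ Icc (n + 1) (2 * n),
        ((if i < 2 * n then e i • σ (i + 1) else 0) + e i • σ i) := by
        rw [pieriMul_eq_linearCombination, map_sum]
        refine sum_congr rfl fun i hi => ?_
        rw [mem_Icc] at hi
        rw [Finsupp.smul_single_one, Finsupp.linearCombination_single, pieri_of_lt (by omega) hi.2]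
        simp only [smul_add, smul_ite, smul_zero, σ, e,
          show 2 * n + 1 - (i + 1) = 2 * n - i by omega, show 2 * n - i + 1 = 2 * n + 1 - i by omega]
    _ = ∑ i ∈ Icc (n + 1) (2 * n), ((if n + 1 < i then e (i - 1) • σ i else 0) + e i • σ i) := by
        have hshift := sum_Icc_ite_lt_succ (fun i => e (i - 1) • σ i) (n + 1) (2 * n)
        simp only [Nat.add_sub_cancel] at hshift
        rw [sum_add_distrib, sum_add_distrib, hshift]
    _ = _ := by
        refine sum_congr rfl fun i hi => ?_
        rw [← ite_zero_smul, ← add_smul, alternating_coeff_add_prev hbase hrec (mem_Icc.1 hi).1]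

/-- With `α_{1,G} = ∑_{i=n+1}^{2n} (-1)^i c_i σ_{i,2n-i}` (where `c_{n+1} = 1`,
`c_i = c_{i-1} + (i - n)`) and `α_{2,G} = ∑_{i=n+1}^{2n} (-1)^i (i-n) σ_{i,2n+1-i}`,
the Pieri rule gives `σ_{1,0} · α_{1,G} = α_{2,G}`. -/
theorem stmt_12 (n : ℕ) (hn : 1 ≤ n) (c : ℕ → ℤ)
    (hbase : c (n + 1) = 1)
    (hrec : ∀ i : ℕ, n + 1 < i → c i = c (i - 1) + ((i : ℤ) - (n : ℤ))) :
    pieriMul n (∑ i ∈ Finset.Icc (n + 1) (2 * n),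
        ((-1 : ℤ) ^ i * c i) • Finsupp.single (i, 2 * n - i) (1 : ℤ)) =
      ∑ i ∈ Finset.Icc (n + 1) (2 * n),
        ((-1 : ℤ) ^ i * ((i : ℤ) - (n : ℤ))) • Finsupp.single (i, 2 * n + 1 - i) (1 : ℤ) :=
  stmt_12_general n c hbase hrec
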